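/- Let c_l ∈ B^{k,l} denote the tableau all of whose columns equal (1,2,…,k)^t. Let p = (⊗_{j=1}^d b_j) ⊗ 1_k^{⊗(L−d)} be a state in (B^{k,1})^{⊗L}. Applying the combinatorial R : B^{k,l} ⊗ B^{k,1} → B^{k,1} ⊗ B^{k,l} successively L times gives a map B^{k,l} ⊗ (B^{k,1})^{⊗L} → (B^{k,1})^{⊗L} ⊗ B^{k,l} sending c_l ⊗ p to p̃ ⊗ c for some c ∈ B^{k,l}. If L is sufficiently large compared with d, then c = c_l. -/

import Mathlib

/-- A semistandard rectangular tableau with `k` rows, `l` columns and entries in `{1,…,n}`: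
rows weakly increase left to right, columns strictly increase top to bottom. -/
structure RectTableau (n k l : ℕ) where
  entry : Fin k → Fin l → ℕ
  entry_pos : ∀ i j, 1 ≤ entry i j
  entry_le : ∀ i j, entry i j ≤ n
  row_mono : ∀ i, Monotone (entry i)
  col_strict : ∀ j, StrictMono fun i => entry i j

namespace BBS

open scoped Classical

variable {n k l k' l' d d1 d2 : ℕ}

/-- The rows of a tableau, from top to bottom, each read left to right. -/
def toRows (x : RectTableau n k l) : List (List ℕ) :=
  (List.finRange k).map fun i => (List.finRange l).map fun j => x.entry i j

/-- The row word of a tableau: rows read left to right, bottom row first. -/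
def rowWord (x : RectTableau n k l) : List ℕ :=
  ((List.finRange k).reverse).flatMap fun i => (List.finRange l).map fun j => x.entry i j

/-- Schensted row insertion of a single letter into a tableau (given as a list of rows). -/
def rowInsertOne : List (List ℕ) → ℕ → List (List ℕ)
  | [], a => [[a]]
  | r :: rest, a =>
    match r.findIdx? (fun x => decide (a < x)) with
    | none => (r ++ [a]) :: rest
    | some idx => (r.set idx a) :: rowInsertOne rest (r.getD idx 0)

/-- Schensted row insertion of a word (leftmost letter first). -/
def rowInsertWord (T : List (List ℕ)) (w : List ℕ) : List (List ℕ) :=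
  w.foldl rowInsertOne T

/-- The combinatorial `R`-matrix `B^{k,l} ⊗ B^{k',l'} → B^{k',l'} ⊗ B^{k,l}`, defined through
its row-insertion characterization: `x ⊗ y ↦ x̃ ⊗ ỹ` where `y ← row(x) = ỹ ← row(x̃)`. -/
noncomputable def combR (x : RectTableau n k l) (y : RectTableau n k' l') :
    RectTableau n k' l' × RectTableau n k l :=
  if h : ∃ p : RectTableau n k' l' × RectTableau n k l,
      rowInsertWord (toRows p.2) (rowWord p.1) = rowInsertWord (toRows y) (rowWord x)
  then h.choose else (y, x)

/-- The number of boxes of a tableau strictly east of the `c`-th column. -/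
def eastCount (T : List (List ℕ)) (c : ℕ) : ℕ := (T.map fun r => r.length - c).sum

/-- The energy function `H` on `B^{k,l} ⊗ B^{k',l'}`. -/
def energyH (x : RectTableau n k l) (y : RectTableau n k' l') : ℤ :=
  (eastCount (rowInsertWord (toRows y) (rowWord x)) (max l l') : ℤ)
    - (min k k' : ℤ) * (min l l' : ℤ)

/-- The tableau `c_l = 1_k^l` all of whose columns are `(1,2,…,k)ᵗ`. -/
def constTab (n k l : ℕ) (h : k ≤ n) : RectTableau n k l where
  entry i _ := i.1 + 1
  entry_pos := by intro i j; omega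
  entry_le := by intro i j; have := i.isLt; omega
  row_mono := fun _ => monotone_const
  col_strict := by
    intro j a b hab
    have h3 : a.1 < b.1 := hab
    dsimp only; omega

/-- Passing the carrier `c ∈ B^{k,l}` through a sequence of boxes by iterating the
combinatorial `R : B^{k,l} ⊗ B^{k,1} → B^{k,1} ⊗ B^{k,l}`. -/
noncomputable def carrierPass : RectTableau n k l → List (RectTableau n k 1) →
    List (RectTableau n k 1) × RectTableau n k l
  | c, [] => ([], c)
  | c, b :: rest =>
    let bc := combR c b
    let rc := carrierPass bc.2 rest
    (bc.1 :: rc.1, rc.2)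

/-- The box ball time evolution `T_l`. -/
noncomputable def timeEv (h : k ≤ n) (l : ℕ) (p : List (RectTableau n k 1)) :
    List (RectTableau n k 1) :=
  (carrierPass (constTab n k l h) p).1

/-- `∑_j H(b^{(j-1)} ⊗ b_j)` along a carrier pass. -/
noncomputable def energySum : RectTableau n k l → List (RectTableau n k 1) → ℤ
  | _, [] => 0
  | c, b :: rest => energyH c b + energySum (combR c b).2 rest

/-- The conserved quantity `E_l(p) = -∑_j H(b^{(j-1)} ⊗ b_j)`. -/
noncomputable def bbsE (h : k ≤ n) (l : ℕ) (p : List (RectTableau n k 1)) : ℤ :=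
  - energySum (constTab n k l h) p

/-- The word used in the signature rule: columns from right to left, each read top to bottom. -/
def sigWord (x : RectTableau n k l) : List ℕ :=
  ((List.finRange l).reverse).flatMap fun j => (List.finRange k).map fun i => x.entry i j

/-- The positions of the unpaired `-`'s (letters `i+1`) and unpaired `+`'s (letters `i`) of a
word, after repeatedly deleting adjacent `+-` pairs.  The first component lists the unpaired
`-` positions in increasing order; the second lists the unpaired `+` positions in
decreasing order. -/
def sigUnpaired (i : ℕ) (w : List ℕ) : List ℕ × List ℕ :=
  (w.zipIdx.map Prod.swap).foldl (fun mp x =>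
    if x.2 = i then (mp.1, x.1 :: mp.2)
    else if x.2 = i + 1 then
      match mp.2 with
      | [] => (mp.1 ++ [x.1], [])
      | _ :: rest => (mp.1, rest)
    else mp) ([], [])

/-- The Kashiwara operator `e_i` on words, via the signature rule. -/
def eWord (i : ℕ) (w : List ℕ) : Option (List ℕ) :=
  match (sigUnpaired i w).1.getLast? with
  | none => none
  | some p => some (w.set p i)

/-- The Kashiwara operator `f_i` on words, via the signature rule. -/
def fWord (i : ℕ) (w : List ℕ) : Option (List ℕ) :=
  match (sigUnpaired i w).2.getLast? with
  | none => none
  | some p => some (w.set p (i + 1))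

/-- Kashiwara operator `e_i` on a two-fold tensor product of rectangular tableaux. -/
noncomputable def eTen (i : ℕ) (p : RectTableau n k l × RectTableau n k' l') :
    Option (RectTableau n k l × RectTableau n k' l') :=
  match eWord i (sigWord p.1 ++ sigWord p.2) with
  | none => none
  | some w =>
    if h : ∃ q : RectTableau n k l × RectTableau n k' l',
        sigWord q.1 ++ sigWord q.2 = w then some h.choose else none

/-- Kashiwara operator `f_i` on a two-fold tensor product of rectangular tableaux. -/
noncomputable def fTen (i : ℕ) (p : RectTableau n k l × RectTableau n k' l') :
    Option (RectTableau n k l × RectTableau n k' l') :=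
  match fWord i (sigWord p.1 ++ sigWord p.2) with
  | none => none
  | some w =>
    if h : ∃ q : RectTableau n k l × RectTableau n k' l',
        sigWord q.1 ++ sigWord q.2 = w then some h.choose else none

/-- Kashiwara operator `e_i` on `(B^{k,1})^{⊗L}`. -/
noncomputable def eList (i : ℕ) (p : List (RectTableau n k 1)) :
    Option (List (RectTableau n k 1)) :=
  match eWord i (p.flatMap sigWord) with
  | none => none
  | some w =>
    if h : ∃ q : List (RectTableau n k 1), q.length = p.length ∧ q.flatMap sigWord = w
    then some h.choose else none

/-- Kashiwara operator `f_i` on `(B^{k,1})^{⊗L}`. -/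
noncomputable def fList (i : ℕ) (p : List (RectTableau n k 1)) :
    Option (List (RectTableau n k 1)) :=
  match fWord i (p.flatMap sigWord) with
  | none => none
  | some w =>
    if h : ∃ q : List (RectTableau n k 1), q.length = p.length ∧ q.flatMap sigWord = w
    then some h.choose else none

/-- Elementary Knuth transformations. -/
inductive KnuthStep : List ℕ → List ℕ → Prop where
  | xzy (u v : List ℕ) (x y z : ℕ) (h1 : x ≤ y) (h2 : y < z) :
      KnuthStep (u ++ x :: z :: y :: v) (u ++ z :: x :: y :: v)
  | yxz (u v : List ℕ) (x y z : ℕ) (h1 : x < y) (h2 : y ≤ z) :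
      KnuthStep (u ++ y :: x :: z :: v) (u ++ y :: z :: x :: v)

/-- Knuth equivalence of words. -/
def KnuthEquiv : List ℕ → List ℕ → Prop := Relation.EqvGen KnuthStep

/-- The column `(1,…,k-2,m,b)ᵗ ∈ B^{k,1}` (where `m` sits in row `k-1` and `b` in row `k`). -/
def mkCol (n k m b : ℕ) (hm : k ≤ m + 1) (hb : m < b) (hn : b ≤ n) : RectTableau n k 1 where
  entry i _ := if i.1 + 1 = k then b else if i.1 + 2 = k then m else i.1 + 1
  entry_pos := by intro i j; split_ifs <;> omega
  entry_le := by intro i j; have := i.isLt; split_ifs <;> omega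
  row_mono := fun _ => monotone_const
  col_strict := by
    intro j a b' hab
    have h1 := a.isLt; have h2 := b'.isLt
    have h3 : a.1 < b'.1 := hab
    dsimp only; split_ifs <;> omega

/-- `[𝟎] = (1,…,k-1,k)ᵗ`. -/
def col0 (n k : ℕ) (hk : 1 ≤ k) (h : k ≤ n) : RectTableau n k 1 :=
  mkCol n k (k-1) k (by omega) (by omega) h
/-- `[𝟏] = (1,…,k-1,k+1)ᵗ`. -/
def col1 (n k : ℕ) (hk : 1 ≤ k) (h : k + 1 ≤ n) : RectTableau n k 1 :=
  mkCol n k (k-1) (k+1) (by omega) (by omega) h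
/-- `[𝟐₊] = (1,…,k-2,k,k+1)ᵗ`. -/
def col2p (n k : ℕ) (hk : 1 ≤ k) (h : k + 1 ≤ n) : RectTableau n k 1 :=
  mkCol n k k (k+1) (by omega) (by omega) h
/-- `[𝟐₋] = (1,…,k-2,k-1,k+2)ᵗ`. -/
def col2m (n k : ℕ) (hk : 1 ≤ k) (h : k + 2 ≤ n) : RectTableau n k 1 :=
  mkCol n k (k-1) (k+2) (by omega) (by omega) h
/-- `[𝟑] = (1,…,k-2,k,k+2)ᵗ`. -/
def col3 (n k : ℕ) (hk : 1 ≤ k) (h : k + 2 ≤ n) : RectTableau n k 1 :=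
  mkCol n k k (k+2) (by omega) (by omega) h
/-- `[𝟒] = (1,…,k-2,k+1,k+2)ᵗ`. -/
def col4 (n k : ℕ) (hk : 1 ≤ k) (h : k + 2 ≤ n) : RectTableau n k 1 :=
  mkCol n k (k+1) (k+2) (by omega) (by omega) h

/-- `ξ_i = [𝟎^{l-i} 𝟏^i] ∈ B^{k,l}`: the first `l-i` columns equal `[𝟎]`, the last `i`
columns equal `[𝟏]`. -/
def xiTab (n k l i : ℕ) (hk : 1 ≤ k) (hkn : k < n) : RectTableau n k l where
  entry r j := if r.1 + 1 = k ∧ l - i ≤ j.1 then k + 1 else r.1 + 1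
  entry_pos := by intro r j; split_ifs <;> omega
  entry_le := by intro r j; have := r.isLt; split_ifs <;> omega
  row_mono := by
    intro r a b hab
    have h3 : a.1 ≤ b.1 := hab
    dsimp only; split_ifs <;> omega
  col_strict := by
    intro j a b hab
    have h1 := a.isLt; have h2 := b.isLt
    have h3 : a.1 < b.1 := hab
    dsimp only; split_ifs <;> omega

/-- The rectangular tableau `[𝟏^a 𝟐_s^{ab-a} 𝟑^{d-ab}] ∈ B^{k,d}` whose first `a` columns are
`[𝟏]`, whose next columns (up to column `ab`) are `[𝟐₊]` (if `s`) or `[𝟐₋]` (if `¬s`), and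
whose remaining columns are `[𝟑]`. -/
def pat3 (n k d a ab : ℕ) (s : Bool) (hk : 2 ≤ k) (hn : k + 2 ≤ n) : RectTableau n k d where
  entry i j :=
    if i.1 + 1 = k then
      (if j.1 < a then k+1 else if j.1 < ab then (if s then k+1 else k+2) else k+2)
    else if i.1 + 2 = k then
      (if j.1 < a then k-1 else if j.1 < ab then (if s then k else k-1) else k)
    else i.1 + 1
  entry_pos := by intro i j; split_ifs <;> omega
  entry_le := by intro i j; have := i.isLt; split_ifs <;> omega
  row_mono := by
    intro i a' b' hab
    have h3 : a'.1 ≤ b'.1 := hab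
    dsimp only; split_ifs <;> omega
  col_strict := by
    intro j a' b' hab
    have h1 := a'.isLt; have h2 := b'.isLt
    have h3 : a'.1 < b'.1 := hab
    dsimp only; split_ifs <;> omega

/-- The `k`-th (bottom) row of a rectangular tableau, as an element of `B^{1,d}`. -/
def rowK (hk : 1 ≤ k) (u : RectTableau n k d) : RectTableau n 1 d where
  entry _ j := u.entry ⟨k - 1, by omega⟩ j
  entry_pos := fun _ j => u.entry_pos _ j
  entry_le := fun _ j => u.entry_le _ j
  row_mono := fun _ => u.row_mono _
  col_strict := by
    intro j a b hab
    have h3 : a.1 < b.1 := hab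
    have h1 := a.isLt; have h2 := b.isLt
    exact absurd h3 (by omega)

/-- The first `k-1` rows of a rectangular tableau, as an element of `B^{k-1,d}`. -/
def rowsLt (u : RectTableau n k d) : RectTableau n (k-1) d where
  entry i j := u.entry (Fin.castLE (Nat.sub_le k 1) i) j
  entry_pos := fun i j => u.entry_pos _ j
  entry_le := fun i j => u.entry_le _ j
  row_mono := fun i => u.row_mono _
  col_strict := by
    intro j a b hab
    exact u.col_strict j (show Fin.castLE (Nat.sub_le k 1) a < Fin.castLE (Nat.sub_le k 1) b from hab)

/-- The soliton conditions on a sequence of columns `S = (b_1,…,b_d)`, `b_j ∈ B^{k,1}`: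
entries weakly decrease along each row of the sequence, the entry in row `k-1` of each
column is `≤ k` and the entry in row `k` is `> k`.  (Strict increase down each column is
already part of the tableau structure.) -/
def IsSolitonFn {n k d : ℕ} (S : Fin d → RectTableau n k 1) : Prop :=
  (∀ j j' : Fin d, j.1 + 1 = j'.1 → ∀ (i : Fin k) (t : Fin 1),
      (S j').entry i t ≤ (S j).entry i t) ∧
  (∀ (j : Fin d) (i : Fin k) (t : Fin 1), i.1 + 1 = k → k < (S j).entry i t) ∧
  (∀ (j : Fin d) (i : Fin k) (t : Fin 1), i.1 + 2 = k → (S j).entry i t ≤ k)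

/-- `lo` and `hi` are the two pieces `u_{<k} ∈ B^{k-1,d}` and `u_k ∈ B^{1,d}` of the internal
degree of freedom `u = [b_d,…,b_1] ∈ B^{k,d}` of the soliton `S = (b_1,…,b_d)`. -/
def SplitDof {n k d : ℕ} (hk : 1 ≤ k) (S : Fin d → RectTableau n k 1)
    (lo : RectTableau n (k-1) d) (hi : RectTableau n 1 d) : Prop :=
  (∀ (i : Fin (k-1)) (j : Fin d),
      lo.entry i j = (S j.rev).entry (Fin.castLE (Nat.sub_le k 1) i) ⟨0, Nat.one_pos⟩) ∧
  (∀ (t : Fin 1) (j : Fin d),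
      hi.entry t j = (S j.rev).entry ⟨k - 1, by omega⟩ ⟨0, Nat.one_pos⟩)

/-- `(lo, hi) ∈ B^{k-1,d} × B^{1,d}` is the split internal degree of freedom of a soliton:
the entries of `lo` lie in `{1,…,k}` and those of `hi` in `{k+1,…,n}`. -/
def IsDof (k : ℕ) {n d : ℕ} (lo : RectTableau n (k-1) d) (hi : RectTableau n 1 d) : Prop :=
  (∀ i j, lo.entry i j ≤ k) ∧ (∀ t j, k < hi.entry t j)

/-- The two-body scattering map `R̃` on solitons with phases: internal degrees of freedom are
exchanged by the product of combinatorial `R`-matrices and the phases shift by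
`δ = 2 d₂ + H(u_k ⊗ v_k) + H(u_{<k} ⊗ v_{<k})`. -/
noncomputable def Rtilde {n k d1 d2 : ℕ}
    (a : ℤ × RectTableau n (k-1) d1 × RectTableau n 1 d1)
    (b : ℤ × RectTableau n (k-1) d2 × RectTableau n 1 d2) :
    (ℤ × RectTableau n (k-1) d2 × RectTableau n 1 d2)
      × (ℤ × RectTableau n (k-1) d1 × RectTableau n 1 d1) :=
  ((b.1 - (2 * (d2:ℤ) + energyH a.2.2 b.2.2 + energyH a.2.1 b.2.1),
      (combR a.2.1 b.2.1).1, (combR a.2.2 b.2.2).1),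
   (a.1 + (2 * (d2:ℤ) + energyH a.2.2 b.2.2 + energyH a.2.1 b.2.1),
      (combR a.2.1 b.2.1).2, (combR a.2.2 b.2.2).2))

end BBS

/-!
The sum of the entries of the carrier is a potential that strictly decreases at every vacuum
box `1_k` until the carrier becomes `c_l`. Row insertion only permutes letters, so
`x ⊗ y ↦ x̃ ⊗ ỹ` preserves the total content and `Σ c̃ + Σ ỹ = Σ c + Σ 1_k`. The vacuum
tableaux `c_l` and `1_k` have the smallest entry sums, so `c_l ⊗ 1_k` is fixed; for `c ≠ c_l`
it suffices that `ỹ ≠ 1_k`. Since `combR` picks an arbitrary solution of the insertion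
equation, we first exhibit one (the last column of `c` and `c` shifted right past `1_k`), which
also identifies `1_k ← row(c)` as `1_k` glued to the left of `c`; counting the largest entry of
`c` in the bottom rows then rules out `ỹ = 1_k`.
-/

lemma getLast?_map_range {α : Type*} (f : ℕ → α) {m : ℕ} (hm : 1 ≤ m) :
    ((List.range m).map f).getLast? = some (f (m - 1)) := by
  obtain ⟨m, rfl⟩ : ∃ m', m = m' + 1 := ⟨m - 1, by omega⟩
  rw [List.range_succ, List.map_append, List.map_singleton, List.getLast?_concat,
    Nat.add_sub_cancel]

lemma iterate_eq_of_potential_lt {α : Type*} {f : α → α} {a : α} (φ : α → ℕ) (hfa : f a = a)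
    (hφ : ∀ x, x ≠ a → φ (f x) < φ x) {x : α} {m : ℕ} (hm : φ x ≤ m) : f^[m] x = a := by
  induction m generalizing x with
  | zero =>
    by_contra hx
    exact absurd (hφ x hx) (by omega)
  | succ m ih =>
    by_cases hx : x = a
    · subst hx
      exact Function.iterate_fixed hfa _
    · rw [Function.iterate_succ_apply]
      exact ih (by have := hφ x hx; omega)

namespace BBS

section RowInsertion

variable {T rest : List (List ℕ)} {r p s u w : List ℕ} {a b : ℕ}

lemma rowInsertWord_cons (a : ℕ) (w : List ℕ) (T : List (List ℕ)) :
    rowInsertWord T (a :: w) = rowInsertWord (rowInsertOne T a) w := rfl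

lemma rowInsertWord_append (w w' : List ℕ) (T : List (List ℕ)) :
    rowInsertWord T (w ++ w') = rowInsertWord (rowInsertWord T w) w' := List.foldl_append

lemma rowInsertOne_cons_of_forall_le (h : ∀ x ∈ r, x ≤ a) :
    rowInsertOne (r :: rest) a = (r ++ [a]) :: rest := by
  have hnone : r.findIdx? (fun x => decide (a < x)) = none :=
    List.findIdx?_eq_none_iff.2 fun x hx => by simpa using h x hx
  simp only [rowInsertOne, hnone]

lemma rowInsertOne_cons_bump (hp : ∀ x ∈ p, x ≤ a) (hab : a < b) :
    rowInsertOne ((p ++ b :: s) :: rest) a = (p ++ a :: s) :: rowInsertOne rest b := by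
  have hnone : p.findIdx? (fun x => decide (a < x)) = none :=
    List.findIdx?_eq_none_iff.2 fun x hx => by simpa using hp x hx
  have hidx : (p ++ b :: s).findIdx? (fun x => decide (a < x)) = some p.length := by
    simp [hnone, List.findIdx?_cons, hab]
  simp [rowInsertOne, hidx, List.set_append_right, List.getD_eq_getElem?_getD]

lemma rowInsertWord_cons_of_forall_le (hw : w.Pairwise (· ≤ ·)) (h : ∀ x ∈ r, ∀ y ∈ w, x ≤ y) :
    rowInsertWord (r :: rest) w = (r ++ w) :: rest := by
  induction w generalizing r with
  | nil => simp [rowInsertWord]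
  | cons a w ih =>
    obtain ⟨haw, hw⟩ := List.pairwise_cons.1 hw
    have step := rowInsertOne_cons_of_forall_le (rest := rest) fun x hx => h x hx a (by simp)
    rw [rowInsertWord_cons, step, ih hw]
    · simp
    · simp only [List.mem_append, List.mem_singleton]
      rintro x (hx | rfl) y hy
      exacts [h x hx y (List.mem_cons_of_mem _ hy), haw y hy]

lemma rowInsertWord_cons_bump (hw : w.Pairwise (· ≤ ·)) (hp : ∀ x ∈ p, ∀ y ∈ w, x ≤ y)
    (hwu : List.Forall₂ (· < ·) w u) :
    rowInsertWord ((p ++ u) :: rest) w = (p ++ w) :: rowInsertWord rest u := by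
  induction hwu generalizing p rest with
  | nil => simp [rowInsertWord]
  | @cons a b w u hab _ ih =>
    obtain ⟨haw, hw⟩ := List.pairwise_cons.1 hw
    rw [rowInsertWord_cons, rowInsertOne_cons_bump (fun x hx => hp x hx a (by simp)) hab,
      List.append_cons, ih hw, rowInsertWord_cons]
    · simp
    · simp only [List.mem_append, List.mem_singleton]
      rintro x (hx | rfl) y hy
      exacts [hp x hx y (List.mem_cons_of_mem _ hy), haw y hy]

lemma rowInsertOne_flatten_perm (T : List (List ℕ)) (a : ℕ) :
    (rowInsertOne T a).flatten.Perm (a :: T.flatten) := by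
  induction T generalizing a with
  | nil => simp [rowInsertOne]
  | cons r rest ih =>
    rw [rowInsertOne]
    split
    · simp
    · rename_i idx hidx
      obtain ⟨hlt, -⟩ := List.findIdx?_eq_some_iff_getElem.1 hidx
      have hset := List.getD_set_perm_cons r idx a
      rw [List.getElem?_eq_getElem hlt, Option.getD_some] at hset
      rw [List.getD_eq_getElem _ _ hlt, List.flatten_cons, List.flatten_cons]
      exact ((ih r[idx]).append_left _).trans (List.perm_middle.trans (hset.append_right _))

lemma rowInsertWord_flatten_perm (T : List (List ℕ)) (w : List ℕ) :
    (rowInsertWord T w).flatten.Perm (T.flatten ++ w) := by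
  induction w generalizing T with
  | nil => simp [rowInsertWord]
  | cons a w ih =>
    rw [rowInsertWord_cons]
    exact (ih _).trans (((rowInsertOne_flatten_perm T a).append_right w).trans
      (by simpa using List.perm_middle.symm))

lemma length_le_length_rowInsertOne (T : List (List ℕ)) (a : ℕ) :
    T.length ≤ (rowInsertOne T a).length := by
  induction T generalizing a with
  | nil => simp [rowInsertOne]
  | cons r rest ih =>
    rw [rowInsertOne]
    split
    · simp
    · simpa using ih _

lemma length_le_length_rowInsertWord (T : List (List ℕ)) (w : List ℕ) :
    T.length ≤ (rowInsertWord T w).length := by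
  induction w generalizing T with
  | nil => rfl
  | cons a w ih => exact (length_le_length_rowInsertOne T a).trans (ih _)

lemma getLast?_rowInsertOne (h : (rowInsertOne T a).length = T.length) :
    ∃ u, (rowInsertOne T a).getLast? = T.getLast?.map (· ++ u) := by
  induction T generalizing a with
  | nil => simp [rowInsertOne] at h
  | cons r rest ih =>
    rw [rowInsertOne] at h ⊢
    cases hf : r.findIdx? (fun x => decide (a < x)) with
    | none =>
      cases rest with
      | nil => exact ⟨[a], by simp⟩
      | cons r' rest => exact ⟨[], by simp⟩
    | some idx =>
      simp only [hf, List.length_cons, Nat.add_right_cancel_iff] at h ⊢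
      obtain ⟨u, hu⟩ := ih h
      cases rest with
      | nil => simp [rowInsertOne] at h
      | cons r' rest =>
        refine ⟨u, ?_⟩
        rw [List.getLast?_cons, hu, List.getLast?_cons_cons, List.getLast?_cons]
        simp

lemma getLast?_rowInsertWord (h : (rowInsertWord T w).length = T.length) :
    ∃ u, (rowInsertWord T w).getLast? = T.getLast?.map (· ++ u) := by
  induction w generalizing T with
  | nil => exact ⟨[], by simp [rowInsertWord]⟩
  | cons a w ih =>
    rw [rowInsertWord_cons] at h ⊢
    have h₁ := length_le_length_rowInsertOne T a
    have h₂ := length_le_length_rowInsertWord (rowInsertOne T a) w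
    obtain ⟨u₁, hu₁⟩ := getLast?_rowInsertOne (T := T) (a := a) (by omega)
    obtain ⟨u₂, hu₂⟩ := ih (T := rowInsertOne T a) (by omega)
    refine ⟨u₁ ++ u₂, ?_⟩
    rw [hu₂, hu₁]
    cases T.getLast? <;> simp

end RowInsertion

section Columns

variable (rest : List (List ℕ))

lemma rowInsertOne_shift_column (m : ℕ) (T : ℕ → List ℕ) (a : ℕ → ℕ)
    (hT : ∀ i ≤ m, ∀ x ∈ T i, x ≤ a i) (ha : ∀ i < m, a i < a (i + 1)) :
    rowInsertOne ((List.range m).map (fun i => T i ++ [a (i + 1)]) ++ T m :: rest) (a 0)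
      = (List.range (m + 1)).map (fun i => T i ++ [a i]) ++ rest := by
  induction m generalizing T a with
  | zero => simpa using rowInsertOne_cons_of_forall_le (hT 0 le_rfl)
  | succ m ih =>
    rw [List.range_succ_eq_map, List.range_succ_eq_map (n := m + 1)]
    simp only [List.map_cons, List.map_map, List.cons_append]
    rw [rowInsertOne_cons_bump (s := []) (hT 0 (Nat.zero_le _)) (ha 0 (Nat.succ_pos _))]
    congr 1
    exact ih (T ∘ Nat.succ) (a ∘ Nat.succ) (fun i hi => hT _ (by omega))
      (fun i hi => ha _ (by omega))

lemma rowInsertWord_column (m : ℕ) (T : ℕ → List ℕ) (a : ℕ → ℕ)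
    (hT : ∀ i < m, ∀ x ∈ T i, x ≤ a i) (ha : ∀ i, i + 1 < m → a i < a (i + 1)) :
    rowInsertWord ((List.range m).map T ++ rest) ((List.range m).reverse.map a)
      = (List.range m).map (fun i => T i ++ [a i]) ++ rest := by
  induction m generalizing a rest with
  | zero => rfl
  | succ m ih =>
    have hword : (List.range (m + 1)).reverse.map a
        = (List.range m).reverse.map (a ∘ Nat.succ) ++ [a 0] := by
      simp [List.range_succ_eq_map, List.map_reverse]
    rw [hword, List.range_succ, List.map_append, List.append_assoc, List.map_singleton,
      List.singleton_append, rowInsertWord_append,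
      ih (a := a ∘ Nat.succ) (rest := _)
        (fun i hi x hx => (hT i (by omega) x hx).trans (ha i (by omega)).le)
        (fun i hi => ha _ (by omega)),
      rowInsertWord_cons, ← List.range_succ]
    exact rowInsertOne_shift_column _ m T a (fun i hi => hT i (by omega))
      (fun i hi => ha i (by omega))

lemma rowInsertWord_shift_rows (m : ℕ) (h : ℕ → ℕ) (R : ℕ → List ℕ)
    (hR : ∀ i ≤ m, (R i).Pairwise (· ≤ ·) ∧ ∀ y ∈ R i, h i ≤ y)
    (hRR : ∀ i < m, List.Forall₂ (· < ·) (R i) (R (i + 1))) :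
    rowInsertWord ((List.range m).map (fun i => h i :: R (i + 1)) ++ [h m] :: rest) (R 0)
      = (List.range (m + 1)).map (fun i => h i :: R i) ++ rest := by
  induction m generalizing h R with
  | zero =>
    obtain ⟨hsort, hle⟩ := hR 0 le_rfl
    simpa using rowInsertWord_cons_of_forall_le (r := [h 0]) (rest := rest) hsort
      (by simpa using hle)
  | succ m ih =>
    obtain ⟨hsort, hle⟩ := hR 0 (Nat.zero_le _)
    rw [List.range_succ_eq_map, List.range_succ_eq_map (n := m + 1)]
    simp only [List.map_cons, List.map_map, List.cons_append]
    rw [show h 0 :: R (0 + 1) = [h 0] ++ R (0 + 1) from rfl,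
      rowInsertWord_cons_bump hsort (by simpa using hle) (hRR 0 (Nat.succ_pos _)),
      List.singleton_append]
    congr 1
    exact ih (h ∘ Nat.succ) (R ∘ Nat.succ) (fun i hi => hR _ (by omega))
      (fun i hi => hRR _ (by omega))

lemma rowInsertWord_rows (m : ℕ) (h : ℕ → ℕ) (R : ℕ → List ℕ) (hh : Monotone h)
    (hR : ∀ i < m, (R i).Pairwise (· ≤ ·) ∧ ∀ y ∈ R i, h i ≤ y)
    (hRR : ∀ i, i + 1 < m → List.Forall₂ (· < ·) (R i) (R (i + 1))) :
    rowInsertWord ((List.range m).map (fun i => [h i]) ++ rest) ((List.range m).reverse.flatMap R)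
      = (List.range m).map (fun i => h i :: R i) ++ rest := by
  induction m generalizing R rest with
  | zero => rfl
  | succ m ih =>
    have hword : (List.range (m + 1)).reverse.flatMap R
        = (List.range m).reverse.flatMap (R ∘ Nat.succ) ++ R 0 := by
      rw [List.range_succ_eq_map, List.reverse_cons, List.flatMap_append, ← List.map_reverse,
        List.flatMap_map]
      simp [Function.comp_def]
    rw [hword, List.range_succ, List.map_append, List.append_assoc, List.map_singleton,
      List.singleton_append, rowInsertWord_append,
      ih (R := R ∘ Nat.succ) (rest := _)
        (fun i hi => ⟨(hR (i + 1) (by omega)).1,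
          fun y hy => (hh (Nat.le_succ i)).trans ((hR (i + 1) (by omega)).2 y hy)⟩)
        (fun i hi => hRR _ (by omega)), ← List.range_succ]
    exact rowInsertWord_shift_rows _ m h R (fun i hi => hR i (by omega))
      (fun i hi => hRR i (by omega))

end Columns

end BBS

namespace RectTableau

variable {n k l : ℕ} (c : RectTableau n k l)

/-- The entry in row `i` and column `j` (0-indexed), with junk value `0` outside the
rectangle. -/
def get (i j : ℕ) : ℕ :=
  if h : i < k ∧ j < l then c.entry ⟨i, h.1⟩ ⟨j, h.2⟩ else 0

def row (i : ℕ) : List ℕ := (List.range l).map (c.get i)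

variable {c} {i i' j j' : ℕ}

lemma get_eq (hi : i < k) (hj : j < l) : c.get i j = c.entry ⟨i, hi⟩ ⟨j, hj⟩ := dif_pos ⟨hi, hj⟩

lemma ext_get {d : RectTableau n k l} (h : ∀ i < k, ∀ j < l, c.get i j = d.get i j) : c = d := by
  have he : c.entry = d.entry := funext fun i => funext fun j => by
    simpa [get_eq i.isLt j.isLt] using h i i.isLt j j.isLt
  cases c
  cases d
  congr

lemma get_le_get_of_le (hi : i < k) (hj : j ≤ j') (hj' : j' < l) : c.get i j ≤ c.get i j' := by
  rw [get_eq hi (hj.trans_lt hj'), get_eq hi hj']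
  exact c.row_mono _ (Fin.mk_le_mk.2 hj)

lemma get_lt_get_of_lt (hi : i < i') (hi' : i' < k) (hj : j < l) : c.get i j < c.get i' j := by
  rw [get_eq (hi.trans hi') hj, get_eq hi' hj]
  exact c.col_strict _ (Fin.mk_lt_mk.2 hi)

lemma get_add_le (hi : i ≤ i') (hi' : i' < k) (hj : j < l) : c.get i j + (i' - i) ≤ c.get i' j := by
  induction i', hi using Nat.le_induction with
  | base => simp
  | succ i' hii' ih =>
    have := get_lt_get_of_lt (c := c) (by omega : i' < i' + 1) hi' hj
    have := ih (by omega)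
    omega

lemma succ_le_get (hi : i < k) (hj : j < l) : i + 1 ≤ c.get i j := by
  have h0 : 1 ≤ c.get 0 j := by rw [get_eq (Nat.zero_lt_of_lt hi) hj]; exact c.entry_pos _ _
  have := get_add_le (c := c) (Nat.zero_le i) hi hj
  omega

lemma get_le (hi : i < k) (hj : j < l) : c.get i j ≤ n := by
  rw [get_eq hi hj]
  exact c.entry_le _ _

lemma row_eq_concat (hl : 1 ≤ l) (i : ℕ) :
    c.row i = (List.range (l - 1)).map (c.get i) ++ [c.get i (l - 1)] := by
  obtain ⟨m, rfl⟩ : ∃ m, l = m + 1 := ⟨l - 1, by omega⟩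
  simp [row, List.range_succ]

lemma get_add_le_get_corner (hi : i < k) (hj : j < l) :
    c.get i j + (k - 1 - i) ≤ c.get (k - 1) (l - 1) := by
  have h₁ := get_le_get_of_le (c := c) hi (Nat.le_sub_one_of_lt hj) (by omega : l - 1 < l)
  have h₂ := get_add_le (c := c) (Nat.le_sub_one_of_lt hi) (by omega : k - 1 < k)
    (by omega : l - 1 < l)
  omega

lemma mem_row : j' ∈ c.row i ↔ ∃ j < l, c.get i j = j' := by
  simp [row]

lemma row_pairwise (hi : i < k) : (c.row i).Pairwise (· ≤ ·) := by
  rw [row, List.pairwise_map]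
  exact List.pairwise_lt_range.imp_of_mem fun hj hj' hjj' =>
    get_le_get_of_le hi hjj'.le (List.mem_range.1 hj')

lemma forall₂_row_lt (hi : i + 1 < k) : List.Forall₂ (· < ·) (c.row i) (c.row (i + 1)) := by
  rw [row, row, List.forall₂_map_left_iff, List.forall₂_map_right_iff]
  exact List.forall₂_same.2 fun j hj => get_lt_get_of_lt (Nat.lt_succ_self i) hi
    (List.mem_range.1 hj)

lemma toRows_eq : BBS.toRows c = (List.range k).map c.row := by
  rw [← List.map_coe_finRange_eq_range, List.map_map, BBS.toRows]
  refine List.map_congr_left fun i _ => ?_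
  rw [Function.comp_apply, row, ← List.map_coe_finRange_eq_range, List.map_map]
  exact List.map_congr_left fun j _ => (get_eq i.isLt j.isLt).symm

lemma rowWord_eq : BBS.rowWord c = (List.range k).reverse.flatMap c.row := by
  rw [BBS.rowWord, ← List.map_coe_finRange_eq_range, ← List.map_reverse, List.flatMap_map]
  refine List.flatMap_congr fun i _ => ?_
  rw [row, ← List.map_coe_finRange_eq_range, List.map_map]
  exact List.map_congr_left fun j _ => (get_eq i.isLt j.isLt).symm

end RectTableau

namespace BBS

open RectTableau

variable {n k l k' l' : ℕ}

lemma get_constTab (h : k ≤ n) {i j : ℕ} (hi : i < k) (hj : j < l) :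
    (constTab n k l h).get i j = i + 1 := by
  rw [get_eq hi hj]
  rfl

lemma toRows_constTab_one (h : k ≤ n) :
    toRows (constTab n k 1 h) = (List.range k).map ([· + 1]) := by
  rw [toRows_eq]
  refine List.map_congr_left fun i hi => ?_
  simp [row, get_constTab h (List.mem_range.1 hi)]

def vacuumGlue (c : RectTableau n k l) : List (List ℕ) :=
  (List.range k).map fun i => (i + 1) :: c.row i

lemma rowInsertWord_vacuum (h : k ≤ n) (c : RectTableau n k l) :
    rowInsertWord (toRows (constTab n k 1 h)) (rowWord c) = vacuumGlue c := by
  simpa [toRows_constTab_one, rowWord_eq, vacuumGlue] using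
    rowInsertWord_rows [] k (· + 1) c.row (fun _ _ h => Nat.succ_le_succ h)
      (fun i hi => ⟨row_pairwise hi, fun y hy => by
        obtain ⟨j, hj, rfl⟩ := mem_row.1 hy
        exact succ_le_get hi hj⟩)
      (fun i hi => forall₂_row_lt hi)

def lastCol (c : RectTableau n k l) (hl : 1 ≤ l) : RectTableau n k 1 where
  entry i _ := c.entry i ⟨l - 1, by omega⟩
  entry_pos _ _ := c.entry_pos _ _
  entry_le _ _ := c.entry_le _ _
  row_mono _ := monotone_const
  col_strict _ _ _ hab := c.col_strict _ hab

def shiftRight (c : RectTableau n k l) : RectTableau n k l where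
  entry i j := if j.1 = 0 then i.1 + 1 else c.get i (j - 1)
  entry_pos i j := by
    have := succ_le_get (c := c) i.isLt (show j.1 - 1 < l by omega)
    split_ifs <;> omega
  entry_le i j := by
    have h₁ := succ_le_get (c := c) i.isLt (show j.1 - 1 < l by omega)
    have h₂ := get_le (c := c) i.isLt (show j.1 - 1 < l by omega)
    split_ifs <;> omega
  row_mono i a b hab := by
    have hab : a.1 ≤ b.1 := hab
    have h₁ := succ_le_get (c := c) i.isLt (show b.1 - 1 < l by omega)
    have h₂ := get_le_get_of_le (c := c) i.isLt (show a.1 - 1 ≤ b.1 - 1 by omega)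
      (show b.1 - 1 < l by omega)
    dsimp only
    split_ifs <;> omega
  col_strict j a b hab := by
    have hab : a.1 < b.1 := hab
    have := get_lt_get_of_lt (c := c) hab b.isLt (show j.1 - 1 < l by omega)
    dsimp only
    split_ifs <;> omega

lemma row_shiftRight (c : RectTableau n k l) (hl : 1 ≤ l) {i : ℕ} (hi : i < k) :
    (shiftRight c).row i = (i + 1) :: (List.range (l - 1)).map (c.get i) := by
  obtain ⟨m, rfl⟩ : ∃ m, l = m + 1 := ⟨l - 1, by omega⟩
  rw [row, List.range_succ_eq_map, List.map_cons, List.map_map, get_eq hi (Nat.succ_pos m)]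
  congr 1
  refine List.map_congr_left fun j hj => ?_
  rw [Function.comp_apply, get_eq hi (by simpa using hj)]
  simp [shiftRight]

lemma rowWord_lastCol (c : RectTableau n k l) (hl : 1 ≤ l) :
    rowWord (lastCol c hl) = (List.range k).reverse.map fun i => c.get i (l - 1) := by
  rw [rowWord_eq, List.map_eq_flatMap]
  refine List.flatMap_congr fun i hi => ?_
  have hi := List.mem_range.1 (List.mem_reverse.1 hi)
  simp [row, get_eq hi (by omega : l - 1 < l), get_eq hi Nat.zero_lt_one, lastCol]

lemma rowInsertWord_shiftRight_lastCol (c : RectTableau n k l) (hl : 1 ≤ l) :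
    rowInsertWord (toRows (shiftRight c)) (rowWord (lastCol c hl)) = vacuumGlue c := by
  have hcol := rowInsertWord_column [] k (fun i => (i + 1) :: (List.range (l - 1)).map (c.get i))
    (fun i => c.get i (l - 1))
    (fun i hi x hx => by
      obtain rfl | ⟨j, hj, rfl⟩ : x = i + 1 ∨ ∃ j < l - 1, c.get i j = x := by simpa using hx
      · exact succ_le_get hi (by omega)
      · exact get_le_get_of_le hi (by omega) (by omega))
    (fun i hi => get_lt_get_of_lt (Nat.lt_succ_self i) hi (by omega))
  rw [List.append_nil, List.append_nil] at hcol
  rw [toRows_eq, rowWord_lastCol, List.map_congr_left fun i hi => row_shiftRight c hl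
    (List.mem_range.1 hi), hcol, vacuumGlue]
  exact List.map_congr_left fun i _ => by rw [row_eq_concat hl, List.cons_append]

lemma exists_rowInsertWord_eq_vacuum (h : k ≤ n) (c : RectTableau n k l) (hl : 1 ≤ l) :
    ∃ p : RectTableau n k 1 × RectTableau n k l,
      rowInsertWord (toRows p.2) (rowWord p.1)
        = rowInsertWord (toRows (constTab n k 1 h)) (rowWord c) :=
  ⟨(lastCol c hl, shiftRight c), by
    rw [rowInsertWord_shiftRight_lastCol, rowInsertWord_vacuum]⟩

def content (c : RectTableau n k l) : Multiset ℕ := (toRows c).flatten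

lemma content_eq_rowWord (c : RectTableau n k l) : content c = (rowWord c : Multiset ℕ) := by
  rw [content, Multiset.coe_eq_coe, toRows_eq, rowWord_eq, List.flatMap_def, List.map_reverse]
  exact (List.reverse_perm _).flatten.symm

lemma mem_content {c : RectTableau n k l} {y : ℕ} :
    y ∈ content c ↔ ∃ i < k, ∃ j < l, c.get i j = y := by
  simp [content, toRows_eq, row]

lemma content_add_of_rowInsertWord_eq {x x' : RectTableau n k l} {y y' : RectTableau n k' l'}
    (h : rowInsertWord (toRows x') (rowWord y') = rowInsertWord (toRows y) (rowWord x)) :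
    content x' + content y' = content y + content x := by
  have := congrArg (fun T => (T.flatten : Multiset ℕ)) h
  simp only [Multiset.coe_eq_coe.2 (rowInsertWord_flatten_perm _ _), ← Multiset.coe_add] at this
  rwa [content_eq_rowWord y', content_eq_rowWord x]

lemma content_combR (x : RectTableau n k l) (y : RectTableau n k' l') :
    content (combR x y).2 + content (combR x y).1 = content y + content x := by
  unfold combR
  split
  · exact content_add_of_rowInsertWord_eq (Classical.choose_spec ‹_›)
  · exact add_comm _ _

lemma sum_content (c : RectTableau n k l) :
    (content c).sum = ∑ i ∈ Finset.range k, ∑ j ∈ Finset.range l, c.get i j := by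
  have hrange (f : ℕ → ℕ) (m : ℕ) : ((List.range m).map f).sum = ∑ i ∈ Finset.range m, f i := by
    rw [Finset.sum, Finset.range_val, Multiset.range, Multiset.map_coe, Multiset.sum_coe]
  rw [content, toRows_eq, Multiset.sum_coe, List.sum_flatten, List.map_map, ← hrange]
  simp only [Function.comp_def, row, hrange]

lemma eq_constTab_of_forall_get_le (h : k ≤ n) {c : RectTableau n k l}
    (hc : ∀ i < k, ∀ j < l, c.get i j ≤ i + 1) : c = constTab n k l h :=
  ext_get fun i hi j hj => by
    rw [get_constTab h hi hj]
    exact le_antisymm (hc i hi j hj) (succ_le_get hi hj)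

lemma sum_content_constTab_le (h : k ≤ n) (c : RectTableau n k l) :
    (content (constTab n k l h)).sum ≤ (content c).sum := by
  rw [sum_content, sum_content]
  refine Finset.sum_le_sum fun i hi => Finset.sum_le_sum fun j hj => ?_
  rw [Finset.mem_range] at hi hj
  rw [get_constTab h hi hj]
  exact succ_le_get hi hj

lemma eq_constTab_of_sum_content_le (h : k ≤ n) {c : RectTableau n k l}
    (hc : (content c).sum ≤ (content (constTab n k l h)).sum) : c = constTab n k l h := by
  have hle : ∀ i < k, ∀ j < l, (constTab n k l h).get i j ≤ c.get i j := fun i hi j hj => by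
    rw [get_constTab h hi hj]
    exact succ_le_get hi hj
  have heq := le_antisymm (sum_content_constTab_le h c) hc
  rw [sum_content, sum_content, Finset.sum_eq_sum_iff_of_le fun i hi =>
    Finset.sum_le_sum fun j hj => hle i (by simpa using hi) j (by simpa using hj)] at heq
  refine eq_constTab_of_forall_get_le h fun i hi j hj => ?_
  have hrow := heq i (Finset.mem_range.2 hi)
  rw [Finset.sum_eq_sum_iff_of_le fun j hj => hle i hi j (by simpa using hj)] at hrow
  rw [← get_constTab h hi hj, hrow j (Finset.mem_range.2 hj)]

lemma sum_content_constTab_lt (h : k ≤ n) {c : RectTableau n k l} (hc : c ≠ constTab n k l h) :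
    (content (constTab n k l h)).sum < (content c).sum :=
  (sum_content_constTab_le h c).lt_of_not_ge fun hle => hc (eq_constTab_of_sum_content_le h hle)

/-- Column strictness keeps every occurrence of a maximal entry in the bottom row. -/
lemma count_content_eq_count_row {c : RectTableau n k l} {M : ℕ} (hk : 1 ≤ k)
    (hM : ∀ y ∈ content c, y ≤ M) : (content c).count M = (c.row (k - 1)).count M := by
  obtain ⟨m, rfl⟩ : ∃ m, k = m + 1 := ⟨k - 1, by omega⟩
  have htop : ((List.range m).map c.row).flatten.count M = 0 := by
    refine List.count_eq_zero.2 fun hmem => ?_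
    obtain ⟨i, hi, j, hj, hij⟩ : ∃ i < m, ∃ j < l, c.get i j = M := by
      simpa [row, eq_comm] using hmem
    have h₁ := get_lt_get_of_lt (c := c) hi (Nat.lt_succ_self m) hj
    have h₂ := hM _ (mem_content.2 ⟨m, Nat.lt_succ_self m, j, hj, rfl⟩)
    omega
  rw [content, toRows_eq, List.range_succ, List.map_append, List.flatten_append,
    Multiset.coe_count, List.count_append, htop]
  simp

lemma row_last_of_rowInsertWord_vacuum (h : k ≤ n) (hk : 1 ≤ k) (hl : 1 ≤ l)
    {c x : RectTableau n k l}
    (hx : rowInsertWord (toRows x) (rowWord (constTab n k 1 h)) = vacuumGlue c) :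
    x.row (k - 1) = k :: (List.range (l - 1)).map (c.get (k - 1)) := by
  have hlen : (rowInsertWord (toRows x) (rowWord (constTab n k 1 h))).length
      = (toRows x).length := by
    rw [hx]
    simp [vacuumGlue, toRows_eq]
  obtain ⟨u, hu⟩ := getLast?_rowInsertWord hlen
  rw [hx, vacuumGlue, getLast?_map_range _ hk, toRows_eq, getLast?_map_range _ hk,
    Nat.sub_add_cancel hk, Option.map_some, Option.some_inj, row_eq_concat hl,
    ← List.cons_append] at hu
  have hul : u.length = 1 := by
    have := congrArg List.length hu
    simp only [List.length_append, List.length_cons, List.length_map, List.length_range,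
      row, List.length_nil] at this
    omega
  exact (List.append_inj' hu.symm (by simp [hul])).1

/-- If the largest entry `M` of `c` exceeds `k`, it ends the bottom row `k :: c.row (k - 1)` of
`vacuumGlue c` and is the letter appended to the bottom row of `x`; so `x` contains `M` once
less than `c`, although both have the same content. -/
lemma eq_constTab_of_rowInsertWord_vacuum (h : k ≤ n) (hk : 1 ≤ k) (hl : 1 ≤ l)
    {c x : RectTableau n k l}
    (hx : rowInsertWord (toRows x) (rowWord (constTab n k 1 h))
      = rowInsertWord (toRows (constTab n k 1 h)) (rowWord c)) :
    c = constTab n k l h := by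
  set M := c.get (k - 1) (l - 1)
  by_contra hc
  have hkM : k < M := by
    by_contra! hMk
    exact hc (eq_constTab_of_forall_get_le h fun i hi j hj => by
      have := get_add_le_get_corner (c := c) hi hj
      omega)
  have hcontent : content x = content c := by
    have := content_add_of_rowInsertWord_eq hx
    rwa [add_comm, add_left_cancel_iff] at this
  have hcM : ∀ y ∈ content c, y ≤ M := fun y hy => by
    obtain ⟨i, hi, j, hj, rfl⟩ := mem_content.1 hy
    have := get_add_le_get_corner (c := c) hi hj
    omega
  rw [rowInsertWord_vacuum] at hx
  have hcountx := count_content_eq_count_row hk (hcontent ▸ hcM)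
  have hcountc := count_content_eq_count_row hk hcM
  rw [hcontent, hcountc, row_last_of_rowInsertWord_vacuum h hk hl hx, row_eq_concat hl]
    at hcountx
  simp [hkM.ne, M] at hcountx

lemma rowInsertWord_combR {x : RectTableau n k l} {y : RectTableau n k' l'}
    (h : ∃ p : RectTableau n k' l' × RectTableau n k l,
      rowInsertWord (toRows p.2) (rowWord p.1) = rowInsertWord (toRows y) (rowWord x)) :
    rowInsertWord (toRows (combR x y).2) (rowWord (combR x y).1)
      = rowInsertWord (toRows y) (rowWord x) := by
  rw [combR, dif_pos h]
  exact h.choose_spec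

lemma combR_vacuum_fst_ne (h : k ≤ n) (hk : 1 ≤ k) (hl : 1 ≤ l) {c : RectTableau n k l}
    (hc : c ≠ constTab n k l h) : (combR c (constTab n k 1 h)).1 ≠ constTab n k 1 h := by
  intro hy
  have hspec := rowInsertWord_combR (exists_rowInsertWord_eq_vacuum h c hl)
  rw [hy] at hspec
  exact hc (eq_constTab_of_rowInsertWord_vacuum h hk hl hspec)

lemma sum_content_combR_vacuum_lt (h : k ≤ n) (hk : 1 ≤ k) (hl : 1 ≤ l) {c : RectTableau n k l}
    (hc : c ≠ constTab n k l h) :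
    (content (combR c (constTab n k 1 h)).2).sum < (content c).sum := by
  have hsum := congrArg Multiset.sum (content_combR c (constTab n k 1 h))
  have hlt := sum_content_constTab_lt h (combR_vacuum_fst_ne h hk hl hc)
  rw [Multiset.sum_add, Multiset.sum_add] at hsum
  omega

lemma combR_constTab_vacuum (h : k ≤ n) :
    (combR (constTab n k l h) (constTab n k 1 h)).2 = constTab n k l h := by
  have hsum := congrArg Multiset.sum (content_combR (constTab n k l h) (constTab n k 1 h))
  have hle := sum_content_constTab_le h (combR (constTab n k l h) (constTab n k 1 h)).1
  rw [Multiset.sum_add, Multiset.sum_add] at hsum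
  exact eq_constTab_of_sum_content_le h (by omega)

lemma carrierPass_snd_append (c : RectTableau n k l) (p q : List (RectTableau n k 1)) :
    (carrierPass c (p ++ q)).2 = (carrierPass (carrierPass c p).2 q).2 := by
  induction p generalizing c with
  | nil => rfl
  | cons b p ih => exact ih _

lemma carrierPass_snd_replicate (c : RectTableau n k l) (b : RectTableau n k 1) (m : ℕ) :
    (carrierPass c (List.replicate m b)).2 = (fun x => (combR x b).2)^[m] c := by
  induction m generalizing c with
  | zero => rfl
  | succ m ih => exact ih _

end BBS

open BBS in
theorem carrier_returns_general {n k : ℕ} (hk : 1 ≤ k) (hkn : k < n)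
    (l : ℕ) (hl : 1 ≤ l) (q : List (RectTableau n k 1)) :
    ∃ N : ℕ, ∀ m : ℕ, N ≤ m →
      (carrierPass (constTab n k l hkn.le)
          (q ++ List.replicate m (constTab n k 1 hkn.le))).2 = constTab n k l hkn.le := by
  refine ⟨(content (carrierPass (constTab n k l hkn.le) q).2).sum, fun m hm => ?_⟩
  rw [carrierPass_snd_append, carrierPass_snd_replicate]
  exact iterate_eq_of_potential_lt (fun c => (content c).sum) (combR_constTab_vacuum hkn.le)
    (fun c hc => sum_content_combR_vacuum_lt hkn.le hk hl hc) hm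

open BBS in
/-- passing the carrier `c_l` through a state `p = (⊗_j b_j) ⊗ 1_k^{⊗(L-d)}`
by the iterated combinatorial `R` returns the carrier `c_l` itself, provided the number of
trailing vacuum boxes `1_k` is sufficiently large. -/
theorem carrier_returns {n k : ℕ} (hn : 2 ≤ n) (hk : 1 ≤ k) (hkn : k < n)
    (l : ℕ) (hl : 1 ≤ l) (q : List (RectTableau n k 1)) :
    ∃ N : ℕ, ∀ m : ℕ, N ≤ m →
      (carrierPass (constTab n k l hkn.le)
          (q ++ List.replicate m (constTab n k 1 hkn.le))).2 = constTab n k l hkn.le :=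
  carrier_returns_general hk hkn l hl q
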